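/- arXiv:1110.1588 — 4 statements merged into one kernel-verified Lean document; each statement's English description precedes it below -/
import Mathlib

section
/- Lemma 2.4 (Kulik's transformation, case n = 1, formulated for the independent Poisson decomposition used in its proof): for every function φ : ℕ → [0,∞], E[ρ · φ(K)] = ∑_{k∈ℕ} φ(k) · e^{−(τ(s₁)−t₀)a} ((τ(s₁)−t₀)a)^k / k!, where τ(s₁) = t₀ + ((T−t₀)/(T−t₁))(s₁−t₁); that is, under the reweighted measure ρ·P, the law of K is Poisson with rate (τ(s₁)−t₀)·a. -/
open MeasureTheory ProbabilityTheory Real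
open scoped ENNReal

/-!
With `c = (T - t₀) / (T - t₁)` the density factors as `ρ = e^{-(t₁ - t₀)(a + b)} c^K c^L c^M`, so
by independence `E[ρ φ(K)]` splits into three Poisson sums. Tilting the Poisson(`r`) weights by
`c^k` gives `e^{r(c - 1)}` times the Poisson(`r c`) weights, and the constant factors cancel
because `(T - t₁)(c - 1) = t₁ - t₀`.
-/

/-- Poisson weights for a real rate (Mathlib's `poissonMeasure` takes its rate in `ℝ≥0`). -/
noncomputable def poissonMass (r : ℝ) (k : ℕ) : ℝ≥0∞ :=
  ENNReal.ofReal (exp (-r) * r ^ k / k.factorial)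

lemma tsum_poissonMass {r : ℝ} (hr : 0 ≤ r) : ∑' k, poissonMass r k = 1 := by
  have hsum : HasSum (fun k : ℕ => exp (-r) * r ^ k / k.factorial) 1 :=
    hasSum_one_poissonMeasure ⟨r, hr⟩
  simp_rw [poissonMass]
  rw [← ENNReal.ofReal_tsum_of_nonneg (fun k => by positivity) hsum.summable,
    hsum.tsum_eq, ENNReal.ofReal_one]

lemma ofReal_pow_mul_poissonMass {c : ℝ} (hc : 0 ≤ c) (r : ℝ) (k : ℕ) :
    ENNReal.ofReal (c ^ k) * poissonMass r k =
      ENNReal.ofReal (exp (r * (c - 1))) * poissonMass (r * c) k := by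
  rw [poissonMass, poissonMass, ← ENNReal.ofReal_mul (pow_nonneg hc k),
    ← ENNReal.ofReal_mul (exp_nonneg _), show -r = r * (c - 1) + -(r * c) by ring, exp_add,
    mul_pow]
  congr 1
  ring

lemma tsum_mul_ofReal_pow_mul_poissonMass {c : ℝ} (hc : 0 ≤ c) (r : ℝ) (f : ℕ → ℝ≥0∞) :
    ∑' k, f k * ENNReal.ofReal (c ^ k) * poissonMass r k =
      ENNReal.ofReal (exp (r * (c - 1))) * ∑' k, f k * poissonMass (r * c) k := by
  simp_rw [mul_assoc, ofReal_pow_mul_poissonMass hc, mul_left_comm (f _), ENNReal.tsum_mul_left]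

lemma tsum_ofReal_pow_mul_poissonMass {c r : ℝ} (hc : 0 ≤ c) (hr : 0 ≤ r) :
    ∑' k, ENNReal.ofReal (c ^ k) * poissonMass r k = ENNReal.ofReal (exp (r * (c - 1))) := by
  simpa [tsum_poissonMass (mul_nonneg hr hc)] using tsum_mul_ofReal_pow_mul_poissonMass hc r 1

lemma ENNReal.ofReal_exp_add (x y : ℝ) :
    ENNReal.ofReal (exp (x + y)) = ENNReal.ofReal (exp x) * ENNReal.ofReal (exp y) := by
  rw [exp_add, ENNReal.ofReal_mul (exp_nonneg x)]

lemma ofReal_exp_log_mul_sub {c : ℝ} (hc : 0 < c) (D : ℝ) (k l m : ℕ) :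
    ENNReal.ofReal (exp (log c * (k + l + m) - D)) = ENNReal.ofReal (exp (-D)) *
      ENNReal.ofReal (c ^ k) * ENNReal.ofReal (c ^ l) * ENNReal.ofReal (c ^ m) := by
  rw [sub_eq_neg_add, ENNReal.ofReal_exp_add, ← rpow_def_of_pos hc, ← Nat.cast_add,
    ← Nat.cast_add, rpow_natCast, pow_add, pow_add, ENNReal.ofReal_mul (by positivity),
    ENNReal.ofReal_mul (by positivity)]
  ring

section

variable {Ω : Type*} [MeasurableSpace Ω] {μ : Measure Ω}

lemma lintegral_comp_eq_tsum {α : Type*} [MeasurableSpace α] [Countable α]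
    [MeasurableSingletonClass α] {X : Ω → α} (hX : Measurable X) (f : α → ℝ≥0∞) :
    ∫⁻ ω, f (X ω) ∂μ = ∑' x, f x * μ {ω | X ω = x} := by
  rw [← lintegral_map .of_discrete hX, lintegral_countable']
  refine tsum_congr fun x => ?_
  rw [Measure.map_apply hX (measurableSet_singleton x)]
  rfl

lemma lintegral_comp_of_poisson {X : Ω → ℕ} (hX : Measurable X) {r : ℝ}
    (hlaw : ∀ k, μ {ω | X ω = k} = poissonMass r k) (f : ℕ → ℝ≥0∞) :
    ∫⁻ ω, f (X ω) ∂μ = ∑' k, f k * poissonMass r k := by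
  simp_rw [lintegral_comp_eq_tsum hX, hlaw]

lemma lintegral_mul_mul_eq_of_iIndepFun {β : Type*} [MeasurableSpace β] {X Y Z : Ω → β}
    (hXYZ : iIndepFun ![X, Y, Z] μ) (hX : Measurable X) (hY : Measurable Y) (hZ : Measurable Z)
    {f g h : β → ℝ≥0∞} (hf : Measurable f) (hg : Measurable g) (hh : Measurable h) :
    ∫⁻ ω, f (X ω) * g (Y ω) * h (Z ω) ∂μ =
      (∫⁻ ω, f (X ω) ∂μ) * (∫⁻ ω, g (Y ω) ∂μ) * ∫⁻ ω, h (Z ω) ∂μ := by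
  have hmeas : ∀ i, Measurable (![X, Y, Z] i) := by
    simp [Fin.forall_fin_succ, hX, hY, hZ]
  have hfun : ∀ i, Measurable (![f, g, h] i) := by
    simp [Fin.forall_fin_succ, hf, hg, hh]
  simpa [Fin.prod_univ_three, mul_assoc] using
    lintegral_prod_eq_prod_lintegral_of_indepFun Finset.univ _ (hXYZ.comp _ hfun)
      fun i => (hfun i).comp (hmeas i)

end

theorem kulik_transformation_n_one_general
    (T t₀ t₁ s₁ a b : ℝ)
    (ht₀ : t₀ ∈ Set.Ico (0 : ℝ) T) (ht₁ : t₁ ∈ Set.Ico (0 : ℝ) T)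
    (hs₁ : s₁ ∈ Set.Icc t₁ T) (ha : 0 ≤ a) (hb : 0 ≤ b)
    {Ω : Type*} [MeasurableSpace Ω] (P : Measure Ω)
    (K L M : Ω → ℕ) (hK : Measurable K) (hL : Measurable L) (hM : Measurable M)
    (hindep : iIndepFun ![K, L, M] P)
    (hKlaw : ∀ k : ℕ, P {ω | K ω = k} =
      ENNReal.ofReal (Real.exp (-((s₁ - t₁) * a)) * ((s₁ - t₁) * a) ^ k / (Nat.factorial k)))
    (hLlaw : ∀ k : ℕ, P {ω | L ω = k} =
      ENNReal.ofReal (Real.exp (-((T - s₁) * a)) * ((T - s₁) * a) ^ k / (Nat.factorial k)))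
    (hMlaw : ∀ k : ℕ, P {ω | M ω = k} =
      ENNReal.ofReal (Real.exp (-((T - t₁) * b)) * ((T - t₁) * b) ^ k / (Nat.factorial k)))
    (φ : ℕ → ℝ≥0∞) :
    ∫⁻ ω, ENNReal.ofReal
        (Real.exp (Real.log ((T - t₀) / (T - t₁)) * (K ω + L ω + M ω)
          - (t₁ - t₀) * (a + b))) * φ (K ω) ∂P =
      ∑' k : ℕ, φ k *
        ENNReal.ofReal
          (Real.exp (-(((t₀ + (T - t₀) / (T - t₁) * (s₁ - t₁)) - t₀) * a)) *
            (((t₀ + (T - t₀) / (T - t₁) * (s₁ - t₁)) - t₀) * a) ^ k / (Nat.factorial k)) := by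
  have hT₁ : T - t₁ ≠ 0 := (sub_pos.2 ht₁.2).ne'
  have hc : 0 < (T - t₀) / (T - t₁) := div_pos (sub_pos.2 ht₀.2) (sub_pos.2 ht₁.2)
  set c := (T - t₀) / (T - t₁)
  set D := (t₁ - t₀) * (a + b)
  set r₁ := (s₁ - t₁) * a
  set w : ℕ → ℝ≥0∞ := fun n => ENNReal.ofReal (c ^ n)
  show _ = ∑' k, φ k * poissonMass ((t₀ + c * (s₁ - t₁) - t₀) * a) k
  have hρ : ∀ ω, ENNReal.ofReal (exp (log c * (K ω + L ω + M ω) - D)) * φ (K ω) =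
      ENNReal.ofReal (exp (-D)) * (φ (K ω) * w (K ω) * w (L ω) * w (M ω)) := fun ω => by
    rw [ofReal_exp_log_mul_sub hc]
    ring
  rw [lintegral_congr hρ, lintegral_const_mul _ (by fun_prop),
    lintegral_mul_mul_eq_of_iIndepFun (f := fun k => φ k * w k) hindep hK hL hM (.of_discrete)
      (.of_discrete) (.of_discrete),
    lintegral_comp_of_poisson hK hKlaw (fun k => φ k * w k),
    lintegral_comp_of_poisson hL hLlaw w, lintegral_comp_of_poisson hM hMlaw w,
    tsum_mul_ofReal_pow_mul_poissonMass hc.le,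
    tsum_ofReal_pow_mul_poissonMass hc.le (mul_nonneg (sub_nonneg.2 hs₁.2) ha),
    tsum_ofReal_pow_mul_poissonMass hc.le (mul_nonneg (sub_nonneg.2 ht₁.2.le) hb),
    show (t₀ + c * (s₁ - t₁) - t₀) * a = r₁ * c by ring]
  have hweight : ENNReal.ofReal (exp (-D)) * ENNReal.ofReal (exp (r₁ * (c - 1))) *
      ENNReal.ofReal (exp ((T - s₁) * a * (c - 1))) *
      ENNReal.ofReal (exp ((T - t₁) * b * (c - 1))) = 1 := by
    have hcT : c * (T - t₁) = T - t₀ := div_mul_cancel₀ _ hT₁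
    rw [← ENNReal.ofReal_exp_add, ← ENNReal.ofReal_exp_add, ← ENNReal.ofReal_exp_add,
      show -D + _ + _ + _ = 0 by linear_combination (a + b) * hcT, exp_zero, ENNReal.ofReal_one]
  conv_rhs => rw [← one_mul (tsum _), ← hweight]
  ring

/-- Lemma 2.4 (Kulik's transformation, case `n = 1`), formulated for the independent
Poisson decomposition used in its proof: if `K, L, M` are independent Poisson random
variables with rates `(s₁ - t₁) * a`, `(T - s₁) * a` and `(T - t₁) * b`, respectively,
and `ρ = exp (γ * (K + L + M) - (t₁ - t₀) * (a + b))` with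
`γ = log ((T - t₀) / (T - t₁))`, then for every `φ : ℕ → [0,∞]` the reweighted
expectation `E[ρ * φ(K)]` coincides with the expectation of `φ` under the Poisson
distribution of rate `(τ(s₁) - t₀) * a`, where
`τ(s₁) = t₀ + ((T - t₀) / (T - t₁)) * (s₁ - t₁)`. -/
theorem kulik_transformation_n_one
    (T t₀ t₁ s₁ a b : ℝ) (hT : 0 < T)
    (ht₀ : t₀ ∈ Set.Ico (0 : ℝ) T) (ht₁ : t₁ ∈ Set.Ico (0 : ℝ) T)
    (hs₁ : s₁ ∈ Set.Icc t₁ T) (ha : 0 ≤ a) (hb : 0 ≤ b)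
    {Ω : Type*} [MeasurableSpace Ω] (P : Measure Ω) [IsProbabilityMeasure P]
    (K L M : Ω → ℕ) (hK : Measurable K) (hL : Measurable L) (hM : Measurable M)
    (hindep : iIndepFun ![K, L, M] P)
    (hKlaw : ∀ k : ℕ, P {ω | K ω = k} =
      ENNReal.ofReal (Real.exp (-((s₁ - t₁) * a)) * ((s₁ - t₁) * a) ^ k / (Nat.factorial k)))
    (hLlaw : ∀ k : ℕ, P {ω | L ω = k} =
      ENNReal.ofReal (Real.exp (-((T - s₁) * a)) * ((T - s₁) * a) ^ k / (Nat.factorial k)))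
    (hMlaw : ∀ k : ℕ, P {ω | M ω = k} =
      ENNReal.ofReal (Real.exp (-((T - t₁) * b)) * ((T - t₁) * b) ^ k / (Nat.factorial k)))
    (φ : ℕ → ℝ≥0∞) :
    ∫⁻ ω, ENNReal.ofReal
        (Real.exp (Real.log ((T - t₀) / (T - t₁)) * (K ω + L ω + M ω)
          - (t₁ - t₀) * (a + b))) * φ (K ω) ∂P =
      ∑' k : ℕ, φ k *
        ENNReal.ofReal
          (Real.exp (-(((t₀ + (T - t₀) / (T - t₁) * (s₁ - t₁)) - t₀) * a)) *
            (((t₀ + (T - t₀) / (T - t₁) * (s₁ - t₁)) - t₀) * a) ^ k / (Nat.factorial k)) :=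
  kulik_transformation_n_one_general T t₀ t₁ s₁ a b ht₀ ht₁ hs₁ ha hb P K L M hK hL hM hindep hKlaw
    hLlaw hMlaw φ
end

section
/- Lemma 4.1, second estimate: there exists a constant C ≥ 0, depending only on T and δ, such that for all λ ∈ [0,1] and all t₀, t₁ ∈ [0,T−δ], λ·|1 − 1/√τ̇₀| + (1−λ)·|1 − 1/√τ̇₁| ≤ C·λ(1−λ)·|t₀ − t₁|. -/
/-!
Both speeds `τ̇ᵢ = (T - t_λ)/(T - tᵢ)` are ratios of numbers in `[δ, T]`, hence at least `δ/T`,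
and on `[δ/T, ∞)` the map `x ↦ 1/√x` is Lipschitz, so `|1 - 1/√τ̇ᵢ| ≲ |τ̇ᵢ - 1|`. Moreover
`τ̇₀ - 1 = (1 - λ)(t₀ - t₁)/(T - t₀)` and `τ̇₁ - 1 = λ(t₁ - t₀)/(T - t₁)`; the weights `λ` and
`1 - λ` in front of the two terms supply the other factor of `λ(1 - λ)`.
-/

open Real Set

lemma abs_sqrt_sub_one_le_abs_sub_one {x : ℝ} (hx : 0 ≤ x) : |√x - 1| ≤ |x - 1| := by
  have hfactor : x - 1 = (√x - 1) * (√x + 1) := by linear_combination (sq_sqrt hx).symm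
  rw [hfactor, abs_mul, abs_of_pos (by positivity : (0 : ℝ) < √x + 1)]
  nlinarith [abs_nonneg (√x - 1), sqrt_nonneg x]

lemma abs_one_sub_one_div_sqrt_le {m x : ℝ} (hm : 0 < m) (hmx : m ≤ x) :
    |1 - 1 / √x| ≤ |x - 1| / √m := by
  have hx : 0 < x := hm.trans_le hmx
  have hsx : 0 < √x := sqrt_pos.mpr hx
  calc |1 - 1 / √x| = |√x - 1| / √x := by
        rw [← abs_of_pos hsx, ← abs_div, abs_of_pos hsx, sub_div, div_self hsx.ne']
    _ ≤ |x - 1| / √m :=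
        div_le_div₀ (abs_nonneg _) (abs_sqrt_sub_one_le_abs_sub_one hx.le) (sqrt_pos.mpr hm)
          (sqrt_le_sqrt hmx)

lemma timeChange_speed_sub_one {T l t₀ t₁ : ℝ} (h : T - t₀ ≠ 0) :
    (T - (l * t₀ + (1 - l) * t₁)) / (T - t₀) - 1 = (1 - l) * (t₀ - t₁) / (T - t₀) := by
  field_simp
  ring

lemma div_le_timeChange_speed {T δ l t₀ t₁ : ℝ} (hl : l ∈ Icc (0 : ℝ) 1)
    (h₀ : t₀ ∈ Icc 0 (T - δ)) (h₁ : t₁ ∈ Icc 0 (T - δ)) (hδ : 0 < δ) :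
    δ / T ≤ (T - (l * t₀ + (1 - l) * t₁)) / (T - t₀) := by
  obtain ⟨hl0, hl1⟩ := hl
  have hmix : l * t₀ + (1 - l) * t₁ ≤ T - δ := by nlinarith [h₀.2, h₁.2]
  exact div_le_div₀ (by linarith) (by linarith) (by linarith [h₀.2]) (by linarith [h₀.1])

lemma abs_one_sub_one_div_sqrt_timeChange_speed_le {T δ l t₀ t₁ : ℝ} (hl : l ∈ Icc (0 : ℝ) 1)
    (h₀ : t₀ ∈ Icc 0 (T - δ)) (h₁ : t₁ ∈ Icc 0 (T - δ)) (hδ : 0 < δ) :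
    |1 - 1 / √((T - (l * t₀ + (1 - l) * t₁)) / (T - t₀))| ≤
      (1 - l) * |t₀ - t₁| / (δ * √(δ / T)) := by
  have hδt₀ : δ ≤ T - t₀ := by linarith [h₀.2]
  have ht₀ : 0 < T - t₀ := hδ.trans_le hδt₀
  have hT : 0 < T := by linarith [h₀.1]
  calc |1 - 1 / √((T - (l * t₀ + (1 - l) * t₁)) / (T - t₀))|
      ≤ |(T - (l * t₀ + (1 - l) * t₁)) / (T - t₀) - 1| / √(δ / T) :=
        abs_one_sub_one_div_sqrt_le (by positivity) (div_le_timeChange_speed hl h₀ h₁ hδ)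
    _ = (1 - l) * |t₀ - t₁| / (T - t₀) / √(δ / T) := by
        rw [timeChange_speed_sub_one ht₀.ne', abs_div, abs_mul, abs_of_nonneg (sub_nonneg.mpr hl.2),
          abs_of_pos ht₀]
    _ ≤ (1 - l) * |t₀ - t₁| / (δ * √(δ / T)) := by
        rw [div_div]
        have hnum : 0 ≤ (1 - l) * |t₀ - t₁| := mul_nonneg (sub_nonneg.mpr hl.2) (abs_nonneg _)
        gcongr

theorem two_time_changes_second_estimate_general (T δ : ℝ) (hδ : δ ∈ Set.Ioo 0 T) :
    ∃ C : ℝ, 0 ≤ C ∧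
      ∀ l ∈ Set.Icc (0 : ℝ) 1, ∀ t₀ ∈ Set.Icc (0 : ℝ) (T - δ), ∀ t₁ ∈ Set.Icc (0 : ℝ) (T - δ),
        l * |1 - 1 / Real.sqrt ((T - (l * t₀ + (1 - l) * t₁)) / (T - t₀))| +
            (1 - l) * |1 - 1 / Real.sqrt ((T - (l * t₀ + (1 - l) * t₁)) / (T - t₁))| ≤
          C * (l * (1 - l)) * |t₀ - t₁| := by
  refine ⟨2 / (δ * √(δ / T)), by have := hδ.1; positivity, ?_⟩
  rintro l hl t₀ h₀ t₁ h₁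
  have hl' : 1 - l ∈ Icc (0 : ℝ) 1 := ⟨sub_nonneg.mpr hl.2, by linarith [hl.1]⟩
  have hterm₀ := abs_one_sub_one_div_sqrt_timeChange_speed_le hl h₀ h₁ hδ.1
  -- the second term is the first one for `(1 - l, t₁, t₀)` in place of `(l, t₀, t₁)`
  have hterm₁ := abs_one_sub_one_div_sqrt_timeChange_speed_le hl' h₁ h₀ hδ.1
  rw [sub_sub_cancel, abs_sub_comm t₁, add_comm] at hterm₁
  calc _ ≤ l * ((1 - l) * |t₀ - t₁| / (δ * √(δ / T))) +
          (1 - l) * (l * |t₀ - t₁| / (δ * √(δ / T))) :=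
        add_le_add (mul_le_mul_of_nonneg_left hterm₀ hl.1) (mul_le_mul_of_nonneg_left hterm₁ hl'.1)
    _ = _ := by ring

/-- Lemma 4.1, second estimate: there is a constant `C` depending only on `T` and `δ` such
that for all `λ ∈ [0,1]` and all `t₀, t₁ ∈ [0, T - δ]`,
`λ * |1 - 1/√τ̇₀| + (1 - λ) * |1 - 1/√τ̇₁| ≤ C * λ * (1 - λ) * |t₀ - t₁|`, where
`t_λ = λ t₀ + (1 - λ) t₁` and `τ̇ᵢ = (T - t_λ)/(T - tᵢ)`. -/
theorem two_time_changes_second_estimate (T δ : ℝ) (hT : 0 < T) (hδ : δ ∈ Set.Ioo 0 T) :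
    ∃ C : ℝ, 0 ≤ C ∧
      ∀ l ∈ Set.Icc (0 : ℝ) 1, ∀ t₀ ∈ Set.Icc (0 : ℝ) (T - δ), ∀ t₁ ∈ Set.Icc (0 : ℝ) (T - δ),
        l * |1 - 1 / Real.sqrt ((T - (l * t₀ + (1 - l) * t₁)) / (T - t₀))| +
            (1 - l) * |1 - 1 / Real.sqrt ((T - (l * t₀ + (1 - l) * t₁)) / (T - t₁))| ≤
          C * (l * (1 - l)) * |t₀ - t₁| :=
  two_time_changes_second_estimate_general T δ hδ
end

section
/- Lemma 4.1, third estimate: there exists a constant C ≥ 0, depending only on T and δ, such that for all λ ∈ [0,1] and all t₀, t₁ ∈ [0,T−δ], |λ·(1 − 1/√τ̇₀) + (1−λ)·(1 − 1/√τ̇₁)| ≤ C·λ(1−λ)·|t₀ − t₁|². -/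
/-!
With `a = T - t₀`, `b = T - t₁` and `m = T - t_λ = λ a + (1 - λ) b`, the quantity to bound is
`(√m - (λ √a + (1 - λ) √b)) / √m`, the Jensen gap of the square root divided by `√m`.
Multiplying the gap by `√m + λ √a + (1 - λ) √b` gives `m - (λ √a + (1 - λ) √b)² = λ (1 - λ) (√a - √b)²`,
and `(√a - √b)² = (a - b)² / (√a + √b)²`. Every square root involved is at least `√δ`, so all
denominators are bounded below by powers of `δ`.
-/

open Real

lemma le_convexComb {a b l δ : ℝ} (ha : δ ≤ a) (hb : δ ≤ b) (hl0 : 0 ≤ l) (hl1 : l ≤ 1) :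
    δ ≤ l * a + (1 - l) * b :=
  convex_Ici δ ha hb hl0 (sub_nonneg.2 hl1) (by ring)

lemma sqrt_convexComb_sub_convexComb_sqrt {a b l : ℝ} (ha : 0 < a) (hb : 0 < b)
    (hl0 : 0 ≤ l) (hl1 : l ≤ 1) :
    √(l * a + (1 - l) * b) - (l * √a + (1 - l) * √b) =
      l * (1 - l) * (a - b) ^ 2 /
        ((√a + √b) ^ 2 * (√(l * a + (1 - l) * b) + (l * √a + (1 - l) * √b))) := by
  have hm : 0 < l * a + (1 - l) * b :=
    (lt_min ha hb).trans_le (le_convexComb (min_le_left a b) (min_le_right a b) hl0 hl1)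
  have hxy : 0 < √a + √b := by positivity
  have hsw : 0 < √(l * a + (1 - l) * b) + (l * √a + (1 - l) * √b) := by
    have : 0 ≤ 1 - l := sub_nonneg.2 hl1
    positivity
  rw [eq_div_iff (by positivity)]
  have hs := sq_sqrt hm.le
  have hx := sq_sqrt ha.le
  have hy := sq_sqrt hb.le
  linear_combination (√a + √b) ^ 2 * hs - (√a + √b) ^ 2 * l * hx - (√a + √b) ^ 2 * (1 - l) * hy +
    l * (1 - l) * (√a ^ 2 - √b ^ 2 + a - b) * (hx - hy)

lemma sqrt_convexComb_sub_convexComb_sqrt_le {a b l δ : ℝ} (hδ : 0 < δ) (ha : δ ≤ a) (hb : δ ≤ b)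
    (hl0 : 0 ≤ l) (hl1 : l ≤ 1) :
    √(l * a + (1 - l) * b) - (l * √a + (1 - l) * √b) ≤
      l * (1 - l) * (a - b) ^ 2 / (8 * δ * √δ) := by
  rw [sqrt_convexComb_sub_convexComb_sqrt (hδ.trans_le ha) (hδ.trans_le hb) hl0 hl1]
  have hl1' : 0 ≤ 1 - l := sub_nonneg.2 hl1
  have hsa : √δ ≤ √a := sqrt_le_sqrt ha
  have hsb : √δ ≤ √b := sqrt_le_sqrt hb
  have hsm : √δ ≤ √(l * a + (1 - l) * b) := sqrt_le_sqrt (le_convexComb ha hb hl0 hl1)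
  have hsw : √δ ≤ l * √a + (1 - l) * √b := le_convexComb hsa hsb hl0 hl1
  have hsδ : 0 < √δ := sqrt_pos.2 hδ
  refine div_le_div_of_nonneg_left (by positivity) (by positivity) ?_
  calc 8 * δ * √δ = (2 * √δ) ^ 2 * (2 * √δ) := by rw [mul_pow, sq_sqrt hδ.le]; ring
    _ ≤ (√a + √b) ^ 2 * (√(l * a + (1 - l) * b) + (l * √a + (1 - l) * √b)) := by
      gcongr <;> linarith

lemma abs_convexComb_one_sub_inv_sqrt_div_le {a b l δ : ℝ} (hδ : 0 < δ) (ha : δ ≤ a)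
    (hb : δ ≤ b) (hl0 : 0 ≤ l) (hl1 : l ≤ 1) :
    |l * (1 - 1 / √((l * a + (1 - l) * b) / a)) +
        (1 - l) * (1 - 1 / √((l * a + (1 - l) * b) / b))| ≤
      1 / (8 * δ ^ 2) * (l * (1 - l)) * (a - b) ^ 2 := by
  set m := l * a + (1 - l) * b
  have hδm : δ ≤ m := le_convexComb ha hb hl0 hl1
  have hsδ : 0 < √δ := sqrt_pos.2 hδ
  have hsm : 0 < √m := sqrt_pos.2 (hδ.trans_le hδm)
  have hgap : 0 ≤ √m - (l * √a + (1 - l) * √b) :=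
    sub_nonneg.2 (strictConcaveOn_sqrt.concaveOn.2 (hδ.le.trans ha) (hδ.le.trans hb) hl0
      (sub_nonneg.2 hl1) (by ring))
  have hexpr : l * (1 - 1 / √(m / a)) + (1 - l) * (1 - 1 / √(m / b)) =
      (√m - (l * √a + (1 - l) * √b)) / √m := by
    rw [sqrt_div (hδ.le.trans hδm), sqrt_div (hδ.le.trans hδm), one_div_div, one_div_div]
    field_simp
    ring
  rw [hexpr, abs_of_nonneg (div_nonneg hgap hsm.le)]
  calc (√m - (l * √a + (1 - l) * √b)) / √m
      ≤ (√m - (l * √a + (1 - l) * √b)) / √δ :=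
        div_le_div_of_nonneg_left hgap hsδ (sqrt_le_sqrt hδm)
    _ ≤ l * (1 - l) * (a - b) ^ 2 / (8 * δ * √δ) / √δ :=
        div_le_div_of_nonneg_right (sqrt_convexComb_sub_convexComb_sqrt_le hδ ha hb hl0 hl1)
          hsδ.le
    _ = 1 / (8 * δ ^ 2) * (l * (1 - l)) * (a - b) ^ 2 := by
        field_simp
        rw [sq_sqrt hδ.le]

theorem two_time_changes_third_estimate_general (T δ : ℝ) (hδ : δ ∈ Set.Ioo 0 T) :
    ∃ C : ℝ, 0 ≤ C ∧
      ∀ l ∈ Set.Icc (0 : ℝ) 1, ∀ t₀ ∈ Set.Icc (0 : ℝ) (T - δ), ∀ t₁ ∈ Set.Icc (0 : ℝ) (T - δ),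
        |l * (1 - 1 / Real.sqrt ((T - (l * t₀ + (1 - l) * t₁)) / (T - t₀))) +
            (1 - l) * (1 - 1 / Real.sqrt ((T - (l * t₀ + (1 - l) * t₁)) / (T - t₁)))| ≤
          C * (l * (1 - l)) * |t₀ - t₁| ^ 2 := by
  refine ⟨1 / (8 * δ ^ 2), by positivity, ?_⟩
  rintro l ⟨hl0, hl1⟩ t₀ ⟨-, ht₀⟩ t₁ ⟨-, ht₁⟩
  have hmid : T - (l * t₀ + (1 - l) * t₁) = l * (T - t₀) + (1 - l) * (T - t₁) := by ring
  have hdiff : |t₀ - t₁| ^ 2 = ((T - t₀) - (T - t₁)) ^ 2 := by rw [sq_abs]; ring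
  rw [hmid, hdiff]
  exact abs_convexComb_one_sub_inv_sqrt_div_le hδ.1 (by linarith) (by linarith) hl0 hl1

/-- Lemma 4.1, third estimate: there is a constant `C` depending only on `T` and `δ` such
that for all `λ ∈ [0,1]` and all `t₀, t₁ ∈ [0, T - δ]`,
`|λ * (1 - 1/√τ̇₀) + (1 - λ) * (1 - 1/√τ̇₁)| ≤ C * λ * (1 - λ) * |t₀ - t₁|²`, where
`t_λ = λ t₀ + (1 - λ) t₁` and `τ̇ᵢ = (T - t_λ)/(T - tᵢ)`. -/
theorem two_time_changes_third_estimate (T δ : ℝ) (hT : 0 < T) (hδ : δ ∈ Set.Ioo 0 T) :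
    ∃ C : ℝ, 0 ≤ C ∧
      ∀ l ∈ Set.Icc (0 : ℝ) 1, ∀ t₀ ∈ Set.Icc (0 : ℝ) (T - δ), ∀ t₁ ∈ Set.Icc (0 : ℝ) (T - δ),
        |l * (1 - 1 / Real.sqrt ((T - (l * t₀ + (1 - l) * t₁)) / (T - t₀))) +
            (1 - l) * (1 - 1 / Real.sqrt ((T - (l * t₀ + (1 - l) * t₁)) / (T - t₁)))| ≤
          C * (l * (1 - l)) * |t₀ - t₁| ^ 2 :=
  two_time_changes_third_estimate_general T δ hδ
end

section
/- Second-order Taylor-type inequality for powers of the norm (the pointwise estimate used in the proof of Lemma 3.3): for every real p ≥ 2 there exists a constant C_p ≥ 0 such that for all x, y in a real inner product space (e.g. ℝ^d), ‖x+y‖^p − ‖x‖^p − p·‖x‖^{p−2}·⟨x, y⟩ ≤ C_p·(‖y‖²·‖x‖^{p−2} + ‖y‖^p). -/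
open scoped RealInnerProductSpace

open Set

/-!
Write `a = ‖x‖`, `b = ‖y‖`, `q = p / 2`, `s = a²` and `N = ‖x + y‖² = s + 2⟪x, y⟫ + b²`.
Then `‖x + y‖ ^ p = N ^ q`, and the linear term `p a^(p-2) ⟪x, y⟫` equals
`q s^(q-1) (N - s - b²)`, so the left-hand side is the second-order Taylor remainder of
`t ↦ t ^ q` between `s` and `N` plus `q s^(q-1) b²`. When `2b < a`, the point `N` stays
within a bounded factor of `s`, and two applications of the mean value inequality bound that
remainder by a multiple of `s^(q-2) (N - s)² ≲ a^(p-2) b²`. When `a ≤ 2b`, every term is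
crudely bounded by a multiple of `b^p` or `a^(p-2) b²`.
-/

namespace Real

lemma rpow_le_rpow_abs_mul_rpow_of_mem_Icc {k s z : ℝ} (r : ℝ) (hs : 0 < s) (hk : 1 ≤ k)
    (hz : z ∈ Icc (s / k) (k * s)) : z ^ r ≤ k ^ |r| * s ^ r := by
  have hk0 : 0 < k := one_pos.trans_le hk
  rcases le_total 0 r with hr | hr
  · calc z ^ r ≤ (k * s) ^ r := rpow_le_rpow ((div_pos hs hk0).le.trans hz.1) hz.2 hr
      _ = k ^ |r| * s ^ r := by rw [abs_of_nonneg hr, mul_rpow hk0.le hs.le]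
  · calc z ^ r ≤ (s / k) ^ r := rpow_le_rpow_of_nonpos (div_pos hs hk0) hz.1 hr
      _ = k ^ |r| * s ^ r := by
        rw [abs_of_nonpos hr, div_rpow hs.le hk0.le, rpow_neg hk0.le, div_eq_mul_inv, mul_comm]

lemma self_mem_Icc_div_mul {k s : ℝ} (hs : 0 < s) (hk : 1 ≤ k) : s ∈ Icc (s / k) (k * s) :=
  ⟨div_le_self hs.le hk, le_mul_of_one_le_left hs.le hk⟩

lemma pos_of_mem_Icc_div_mul {k s z : ℝ} (hs : 0 < s) (hk : 1 ≤ k)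
    (hz : z ∈ Icc (s / k) (k * s)) : 0 < z :=
  (div_pos hs (one_pos.trans_le hk)).trans_le hz.1

lemma abs_rpow_sub_rpow_le_of_mem_Icc {k s z : ℝ} (r : ℝ) (hs : 0 < s) (hk : 1 ≤ k)
    (hz : z ∈ Icc (s / k) (k * s)) :
    |z ^ r - s ^ r| ≤ |r| * k ^ |r - 1| * s ^ (r - 1) * |z - s| := by
  refine (convex_Icc _ _).norm_image_sub_le_of_norm_hasDerivWithin_le (f := fun w => w ^ r)
    (f' := fun w => r * w ^ (r - 1)) (fun w hw => ?_) (fun w hw => ?_)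
    (self_mem_Icc_div_mul hs hk) hz
  · exact (hasDerivAt_rpow_const (Or.inl (pos_of_mem_Icc_div_mul hs hk hw).ne')).hasDerivWithinAt
  · rw [norm_eq_abs, abs_mul, abs_of_pos (rpow_pos_of_pos (pos_of_mem_Icc_div_mul hs hk hw) _),
      mul_assoc]
    exact mul_le_mul_of_nonneg_left
      (rpow_le_rpow_abs_mul_rpow_of_mem_Icc _ hs hk hw) (abs_nonneg r)

lemma abs_rpow_sub_rpow_sub_mul_le_of_mem_Icc {k s N : ℝ} (q : ℝ) (hs : 0 < s) (hk : 1 ≤ k)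
    (hN : N ∈ Icc (s / k) (k * s)) :
    |N ^ q - s ^ q - q * s ^ (q - 1) * (N - s)| ≤
      |q| * |q - 1| * k ^ |q - 2| * s ^ (q - 2) * (N - s) ^ 2 := by
  have hsub : uIcc s N ⊆ Icc (s / k) (k * s) := uIcc_subset_Icc (self_mem_Icc_div_mul hs hk) hN
  have hmvt := (convex_uIcc s N).norm_image_sub_le_of_norm_hasDerivWithin_le
    (f := fun w => w ^ q - q * s ^ (q - 1) * w) (f' := fun w => q * w ^ (q - 1) - q * s ^ (q - 1))
    (C := |q| * |q - 1| * k ^ |q - 2| * s ^ (q - 2) * |N - s|)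
    (fun w hw => ?_) (fun w hw => ?_) left_mem_uIcc right_mem_uIcc
  · simp only [norm_eq_abs] at hmvt
    convert hmvt using 1
    · ring_nf
    · rw [mul_assoc _ |N - s|, abs_mul_abs_self]; ring
  · have hw0 := pos_of_mem_Icc_div_mul hs hk (hsub hw)
    exact (((hasDerivAt_rpow_const (Or.inl hw0.ne')).sub
      ((hasDerivAt_id w).const_mul _)).congr_deriv (by ring)).hasDerivWithinAt
  · have hlip := abs_rpow_sub_rpow_le_of_mem_Icc (q - 1) hs hk (hsub hw)
    rw [show q - 1 - 1 = q - 2 by ring] at hlip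
    have hC : 0 ≤ |q - 1| * k ^ |q - 2| * s ^ (q - 2) := by
      have hk0 : 0 ≤ k := zero_le_one.trans hk
      positivity
    calc ‖q * w ^ (q - 1) - q * s ^ (q - 1)‖ = |q| * |w ^ (q - 1) - s ^ (q - 1)| := by
          rw [norm_eq_abs, ← mul_sub, abs_mul]
      _ ≤ |q| * (|q - 1| * k ^ |q - 2| * s ^ (q - 2) * |N - s|) :=
          mul_le_mul_of_nonneg_left (hlip.trans (mul_le_mul_of_nonneg_left
            (abs_sub_left_of_mem_uIcc hw) hC)) (abs_nonneg q)
      _ = _ := by ring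

lemma sq_rpow_half {x : ℝ} (hx : 0 ≤ x) (r : ℝ) : (x ^ 2) ^ (r / 2) = x ^ r := by
  rw [← rpow_natCast, ← rpow_mul hx]
  congr 1
  push_cast
  ring

end Real

section NormRpow

variable {H : Type*} [NormedAddCommGroup H] [InnerProductSpace ℝ H]

lemma norm_add_rpow_sub_sub_le_of_le {p : ℝ} (hp : 0 ≤ p) {x y : H}
    (hxy : ‖x‖ ≤ 2 * ‖y‖) :
    ‖x + y‖ ^ p - ‖x‖ ^ p - p * ‖x‖ ^ (p - 2) * ⟪x, y⟫ ≤
      3 ^ p * ‖y‖ ^ p + 2 * p * (‖y‖ ^ 2 * ‖x‖ ^ (p - 2)) := by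
  have hpow : ‖x + y‖ ^ p ≤ 3 ^ p * ‖y‖ ^ p := by
    rw [← Real.mul_rpow (by norm_num) (norm_nonneg y)]
    exact Real.rpow_le_rpow (norm_nonneg _) ((norm_add_le x y).trans (by linarith)) hp
  have hinner : -⟪x, y⟫ ≤ 2 * ‖y‖ ^ 2 := by
    have := neg_le_of_abs_le (abs_real_inner_le_norm x y)
    nlinarith [norm_nonneg y]
  have hc : 0 ≤ p * ‖x‖ ^ (p - 2) := mul_nonneg hp (Real.rpow_nonneg (norm_nonneg x) _)
  linarith [mul_le_mul_of_nonneg_left hinner hc, Real.rpow_nonneg (norm_nonneg x) p]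

lemma norm_add_rpow_sub_sub_le_of_lt (p : ℝ) {x y : H} (hxy : 2 * ‖y‖ < ‖x‖) :
    ‖x + y‖ ^ p - ‖x‖ ^ p - p * ‖x‖ ^ (p - 2) * ⟪x, y⟫ ≤
      |p / 2| * (25 / 4 * |p / 2 - 1| * 4 ^ |p / 2 - 2| + 1) *
        (‖y‖ ^ 2 * ‖x‖ ^ (p - 2)) := by
  have hp2 : ‖x‖ ^ (p - 2) = (‖x‖ ^ 2) ^ (p / 2 - 1) := by
    rw [← Real.sq_rpow_half (norm_nonneg x)]; ring_nf
  rw [← Real.sq_rpow_half (norm_nonneg (x + y)), ← Real.sq_rpow_half (norm_nonneg x) p, hp2]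
  set q := p / 2 with hq
  set s := ‖x‖ ^ 2
  set N := ‖x + y‖ ^ 2 with hN_def
  have hx : 0 < ‖x‖ := (mul_nonneg zero_le_two (norm_nonneg y)).trans_lt hxy
  have hs : 0 < s := by positivity
  have hNs : N - s = 2 * ⟪x, y⟫ + ‖y‖ ^ 2 := by
    rw [hN_def, norm_add_sq_real]; ring
  have hinner := abs_le.mp (abs_real_inner_le_norm x y)
  have hN : N ∈ Icc (s / 4) (4 * s) := by
    have hlow : ‖x‖ - ‖y‖ ≤ ‖x + y‖ := by
      simpa using norm_sub_norm_le x (-y)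
    constructor <;> nlinarith [norm_add_le x y, norm_nonneg y]
  have hNs_sq : (N - s) ^ 2 ≤ 25 / 4 * (s * ‖y‖ ^ 2) := by
    have hbound : |2 * ⟪x, y⟫ + ‖y‖ ^ 2| ≤ 5 / 2 * (‖x‖ * ‖y‖) :=
      abs_le.mpr ⟨by nlinarith [norm_nonneg y], by nlinarith [norm_nonneg y]⟩
    calc (N - s) ^ 2 = |2 * ⟪x, y⟫ + ‖y‖ ^ 2| ^ 2 := by rw [hNs, sq_abs]
      _ ≤ (5 / 2 * (‖x‖ * ‖y‖)) ^ 2 := pow_le_pow_left₀ (abs_nonneg _) hbound 2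
      _ = 25 / 4 * (s * ‖y‖ ^ 2) := by ring
  have hremainder : s ^ (q - 2) * (N - s) ^ 2 ≤ 25 / 4 * (s ^ (q - 1) * ‖y‖ ^ 2) := by
    calc s ^ (q - 2) * (N - s) ^ 2 ≤ s ^ (q - 2) * (25 / 4 * (s * ‖y‖ ^ 2)) :=
          mul_le_mul_of_nonneg_left hNs_sq (by positivity)
      _ = 25 / 4 * (s ^ (q - 2 + 1) * ‖y‖ ^ 2) := by rw [Real.rpow_add_one hs.ne']; ring
      _ = 25 / 4 * (s ^ (q - 1) * ‖y‖ ^ 2) := by ring_nf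
  have hbregman :=
    le_of_abs_le (Real.abs_rpow_sub_rpow_sub_mul_le_of_mem_Icc q hs (by norm_num) hN)
  have hsplit : N ^ q - s ^ q - p * s ^ (q - 1) * ⟪x, y⟫ =
      N ^ q - s ^ q - q * s ^ (q - 1) * (N - s) + q * (s ^ (q - 1) * ‖y‖ ^ 2) := by
    rw [show p = 2 * q by rw [hq]; ring]
    linear_combination (q * s ^ (q - 1)) * hNs
  have hA : 0 ≤ |q| * |q - 1| * 4 ^ |q - 2| := by positivity
  have hlin : q * (s ^ (q - 1) * ‖y‖ ^ 2) ≤ |q| * (s ^ (q - 1) * ‖y‖ ^ 2) :=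
    mul_le_mul_of_nonneg_right (le_abs_self q) (by positivity)
  linarith [mul_le_mul_of_nonneg_left hremainder hA]

end NormRpow

/-- Second-order Taylor-type inequality for real powers of the norm (the pointwise
estimate used in the proof of Lemma 3.3): for every real `p ≥ 2` there is a constant
`C_p ≥ 0` such that, in a real inner product space,
`‖x+y‖^p - ‖x‖^p - p ‖x‖^(p-2) ⟪x, y⟫ ≤ C_p (‖y‖² ‖x‖^(p-2) + ‖y‖^p)`. -/
theorem norm_rpow_taylor_estimate (H : Type*) [NormedAddCommGroup H]
    [InnerProductSpace ℝ H] (p : ℝ) (hp : 2 ≤ p) :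
    ∃ C : ℝ, 0 ≤ C ∧ ∀ x y : H,
      ‖x + y‖ ^ p - ‖x‖ ^ p - p * ‖x‖ ^ (p - 2) * ⟪x, y⟫ ≤
        C * (‖y‖ ^ (2 : ℝ) * ‖x‖ ^ (p - 2) + ‖y‖ ^ p) := by
  have hp0 : 0 ≤ p := by linarith
  set K := |p / 2| * (25 / 4 * |p / 2 - 1| * 4 ^ |p / 2 - 2| + 1) with hK_def
  have hK : 0 ≤ K := by positivity
  refine ⟨3 ^ p + 2 * p + K, by positivity, fun x y => ?_⟩
  rw [Real.rpow_two]
  have hX : 0 ≤ ‖y‖ ^ 2 * ‖x‖ ^ (p - 2) := by positivity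
  have hY : 0 ≤ ‖y‖ ^ p := by positivity
  have h3 : (0 : ℝ) ≤ 3 ^ p := by positivity
  rcases le_or_gt ‖x‖ (2 * ‖y‖) with hxy | hxy
  · linarith [norm_add_rpow_sub_sub_le_of_le hp0 hxy, mul_nonneg h3 hX, mul_nonneg hp0 hY,
      mul_nonneg hK hX, mul_nonneg hK hY]
  · have h := norm_add_rpow_sub_sub_le_of_lt p hxy
    rw [← hK_def] at h
    linarith [mul_nonneg h3 hX, mul_nonneg hp0 hY, mul_nonneg h3 hY, mul_nonneg hp0 hX,
      mul_nonneg hK hY]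
end
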